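/- Fix α = p/q ∈ ℚ with q > 0 and gcd(p,q) = 1. There is a constant K = K(p,q) > 0 such that for all R ≥ 1 and all ε > 0, |Δ_α(ε,R) − (ε q² R²/(p²+q²) + (1/(q²ε))·{ε q² R/√(p²+q²)}·(1 − {ε q² R/√(p²+q²)}))| ≤ K·(1 + εR), where {x} := x − ⌊x⌋ denotes the fractional part of x. -/

import Mathlib

open Filter Real

/-- `latticeT α ε R` is the triangle count `Δ_α(ε, R)`: the number of lattice points
`(m, n)` with `1 ≤ m ≤ R/√(1+α²)` and `m(α-ε) < n < m(α+ε)`. -/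
noncomputable def latticeT (α ε R : ℝ) : ℕ :=
  ∑ m ∈ Finset.Icc 1 ⌊R / Real.sqrt (1 + α ^ 2)⌋,
    Set.ncard {n : ℤ | (m : ℝ) * (α - ε) < n ∧ (n : ℝ) < m * (α + ε)}

/-- `{x}(1-{x})` is a 1-Lipschitz function of `x`. -/
lemma fract_lip (a b : ℝ) :
    |Int.fract a * (1 - Int.fract a) - Int.fract b * (1 - Int.fract b)| ≤ |a - b| := by
  wlog hab : a ≤ b with H
  · rw [abs_sub_comm, abs_sub_comm a b]; exact H b a (le_of_not_ge hab)
  have ha0 := Int.fract_nonneg a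
  have ha1 := Int.fract_lt_one a
  have hb0 := Int.fract_nonneg b
  have hb1 := Int.fract_lt_one b
  have hda : Int.fract a = a - ⌊a⌋ := rfl
  have hdb : Int.fract b = b - ⌊b⌋ := rfl
  have hfa := Int.floor_le a
  have hfb := Int.floor_le b
  have hfa' := Int.lt_floor_add_one a
  have hfb' := Int.lt_floor_add_one b
  rw [abs_sub_comm a b, abs_of_nonneg (sub_nonneg.mpr hab), abs_sub_le_iff]
  have hflr : ⌊a⌋ ≤ ⌊b⌋ := Int.floor_le_floor hab
  rcases lt_trichotomy ⌊b⌋ (⌊a⌋ + 1) with h | h | h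
  · have hfl : (⌊b⌋ : ℝ) = (⌊a⌋ : ℝ) := by exact_mod_cast (by omega : ⌊b⌋ = ⌊a⌋)
    have key : Int.fract a * (1 - Int.fract a) - Int.fract b * (1 - Int.fract b)
        = (b - a) * (Int.fract a + Int.fract b - 1) := by
      rw [hda, hdb, hfl]; ring
    constructor
    · rw [key]
      nlinarith [mul_nonneg (sub_nonneg.mpr hab)
        (by linarith : (0:ℝ) ≤ 2 - (Int.fract a + Int.fract b))]
    · rw [show Int.fract b * (1 - Int.fract b) - Int.fract a * (1 - Int.fract a)
        = -((b - a) * (Int.fract a + Int.fract b - 1)) by rw [← key]; ring]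
      nlinarith [mul_nonneg (sub_nonneg.mpr hab) (add_nonneg ha0 hb0)]
  · have hcast : ((⌊b⌋ : ℝ)) = (⌊a⌋ : ℝ) + 1 := by exact_mod_cast h
    have key2 : b - a = Int.fract b + 1 - Int.fract a := by rw [hda, hdb, hcast]; ring
    constructor
    · nlinarith [sq_nonneg (1 - Int.fract a),
        mul_nonneg hb0 (by linarith : (0:ℝ) ≤ 1 - Int.fract b)]
    · nlinarith [sq_nonneg (Int.fract b),
        mul_nonneg ha0 (by linarith : (0:ℝ) ≤ 1 - Int.fract a)]
  · have hge : (⌊a⌋ : ℝ) + 2 ≤ (⌊b⌋ : ℝ) := by exact_mod_cast (by omega : ⌊a⌋ + 2 ≤ ⌊b⌋)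
    have key3 : (1:ℝ) ≤ b - a := by linarith
    constructor <;>
      nlinarith [sq_nonneg (Int.fract a - 1/2), sq_nonneg (Int.fract b - 1/2),
        mul_nonneg ha0 (by linarith : (0:ℝ) ≤ 1 - Int.fract a),
        mul_nonneg hb0 (by linarith : (0:ℝ) ≤ 1 - Int.fract b)]

/-- Counting points of a residue class modulo `q` in an interval. -/
lemma count_res (q c A B : ℤ) (hq : 0 < q) (hAB : A ≤ B) :
    |((((Finset.Ioc A B).filter (fun m => q ∣ m - c)).card : ℝ)) - ((B : ℝ) - A)/q| ≤ 1 := by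
  have hq0 : q ≠ 0 := by omega
  have e1 : q * ((A - c) / q) ≤ A - c := by
    have := Int.mul_ediv_add_emod (A - c) q; have := Int.emod_nonneg (A - c) hq0; omega
  have e2 : A - c < q * ((A - c) / q) + q := by
    have := Int.mul_ediv_add_emod (A - c) q; have := Int.emod_lt_of_pos (A - c) hq; omega
  have e3 : q * ((B - c) / q) ≤ B - c := by
    have := Int.mul_ediv_add_emod (B - c) q; have := Int.emod_nonneg (B - c) hq0; omega
  have e4 : B - c < q * ((B - c) / q) + q := by
    have := Int.mul_ediv_add_emod (B - c) q; have := Int.emod_lt_of_pos (B - c) hq; omega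
  have hcard : ((Finset.Ioc A B).filter (fun m => q ∣ m - c)).card
      = (Finset.Ioc ((A - c) / q) ((B - c) / q)).card := by
    apply Finset.card_nbij' (fun m => (m - c) / q) (fun k => c + q * k)
    · intro m hm
      simp only [Finset.mem_coe, Finset.mem_filter, Finset.mem_Ioc] at hm
      obtain ⟨⟨hm1, hm2⟩, hdvd⟩ := hm
      have hqk : q * ((m - c)/q) = m - c := Int.mul_ediv_cancel' hdvd
      simp only [Finset.mem_coe, Finset.mem_Ioc]
      constructor
      · by_contra hle
        push_neg at hle
        have : q * ((m - c)/q) ≤ q * ((A - c) / q) :=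
          mul_le_mul_of_nonneg_left hle (by omega)
        omega
      · by_contra hle
        push_neg at hle
        have : q * ((B - c) / q) + q ≤ q * ((m - c)/q) := by nlinarith
        omega
    · intro k hk
      simp only [Finset.mem_coe, Finset.mem_Ioc] at hk
      obtain ⟨hk1, hk2⟩ := hk
      have h1 : q * ((A - c) / q) + q ≤ q * k := by nlinarith
      have h2 : q * k ≤ q * ((B - c) / q) := mul_le_mul_of_nonneg_left hk2 (by omega)
      simp only [Finset.mem_coe, Finset.mem_filter, Finset.mem_Ioc]
      exact ⟨⟨by omega, by omega⟩, ⟨k, by ring⟩⟩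
    · intro m hm
      simp only [Finset.mem_coe, Finset.mem_filter, Finset.mem_Ioc] at hm
      have := Int.mul_ediv_cancel' hm.2
      show c + q * ((m - c) / q) = m
      omega
    · intro k _
      show (c + q * k - c) / q = k
      rw [add_sub_cancel_left, Int.mul_ediv_cancel_left _ hq0]
  rw [hcard, Int.card_Ioc]
  have hK12 : (A - c) / q ≤ (B - c) / q := Int.ediv_le_ediv hq (by omega)
  have hcast : ((((B - c) / q - (A - c) / q).toNat : ℝ))
      = (((B - c) / q : ℤ) : ℝ) - (((A - c) / q : ℤ) : ℝ) := by
    have h0 : 0 ≤ (B - c)/q - (A - c)/q := sub_nonneg.mpr hK12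
    calc ((((B - c) / q - (A - c) / q).toNat : ℕ) : ℝ)
        = ((((B - c) / q - (A - c) / q).toNat : ℤ) : ℝ) := by norm_cast
      _ = _ := by rw [Int.toNat_of_nonneg h0]; push_cast; ring
  rw [hcast]
  have hqR : (0:ℝ) < q := by exact_mod_cast hq
  have c1 : (q:ℝ) * (((A - c) / q : ℤ) : ℝ) ≤ (A:ℝ) - c := by exact_mod_cast e1
  have c2 : (A:ℝ) - c < q * (((A - c) / q : ℤ) : ℝ) + q := by exact_mod_cast e2
  have c3 : (q:ℝ) * (((B - c) / q : ℤ) : ℝ) ≤ (B:ℝ) - c := by exact_mod_cast e3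
  have c4 : (B:ℝ) - c < q * (((B - c) / q : ℤ) : ℝ) + q := by exact_mod_cast e4
  have hd : ((B:ℝ) - A)/q * q = (B:ℝ) - A := div_mul_cancel₀ _ (ne_of_gt hqR)
  rw [abs_le]
  constructor <;> nlinarith

lemma sum_abs_Icc : ∀ J : ℤ, 0 ≤ J → (∑ j ∈ Finset.Icc (-J) J, |j|) = J * (J + 1) := by
  have : ∀ n : ℕ, (∑ j ∈ Finset.Icc (-(n:ℤ)) n, |j|) = n * (n + 1) := by
    intro n
    induction n with
    | zero => norm_num
    | succ n ih =>
      have hins : Finset.Icc (-((n:ℤ)+1)) ((n:ℤ)+1)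
          = insert (-((n:ℤ)+1)) (insert ((n:ℤ)+1) (Finset.Icc (-(n:ℤ)) (n:ℤ))) := by
        ext j
        simp only [Finset.mem_Icc, Finset.mem_insert]
        omega
      push_cast
      rw [hins, Finset.sum_insert (by simp only [Finset.mem_insert, Finset.mem_Icc]; omega),
        Finset.sum_insert (by simp only [Finset.mem_Icc]; omega), ih]
      rw [abs_of_nonpos (by omega), abs_of_nonneg (by omega)]
      ring
  intro J hJ
  obtain ⟨n, rfl⟩ : ∃ n : ℕ, J = (n : ℤ) := ⟨J.toNat, (Int.toNat_of_nonneg hJ).symm⟩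
  exact this n

set_option maxHeartbeats 1000000

/-- Fix `α = p/q ∈ ℚ` with `q > 0` and `gcd(p,q) = 1`. There is `K = K(p,q) > 0` such
that for all `R ≥ 1` and all `ε > 0`,
`|Δ_α(ε,R) - (ε q² R²/(p²+q²) + (1/(q²ε))·{ε q² R/√(p²+q²)}·(1 − {ε q² R/√(p²+q²)}))|
  ≤ K·(1 + εR)`. -/

theorem Delta_rational (p q : ℤ) (hq : 0 < q) (hpq : Int.gcd p q = 1) :
    ∃ K > (0 : ℝ), ∀ R : ℝ, 1 ≤ R → ∀ ε : ℝ, 0 < ε →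
      |(latticeT ((p : ℝ) / q) ε R : ℝ) -
          (ε * (q : ℝ) ^ 2 * R ^ 2 / ((p : ℝ) ^ 2 + (q : ℝ) ^ 2) +
            1 / ((q : ℝ) ^ 2 * ε) *
              Int.fract (ε * (q : ℝ) ^ 2 * R / Real.sqrt ((p : ℝ) ^ 2 + (q : ℝ) ^ 2)) *
              (1 - Int.fract (ε * (q : ℝ) ^ 2 * R / Real.sqrt ((p : ℝ) ^ 2 + (q : ℝ) ^ 2))))| ≤
        K * (1 + ε * R) := by
  classical
  have hqR : (0:ℝ) < q := by exact_mod_cast hq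
  have hq1R : (1:ℝ) ≤ q := by exact_mod_cast hq
  have hq0 : (q:ℝ) ≠ 0 := ne_of_gt hqR
  have hqz : q ≠ 0 := by omega
  refine ⟨4*(q:ℝ) + 6, by linarith, ?_⟩
  intro R hR ε hε
  obtain ⟨u, v, huv⟩ : IsCoprime p q := Int.isCoprime_iff_gcd_eq_one.mpr hpq
  have hPQ : (0:ℝ) < (p:ℝ)^2 + (q:ℝ)^2 := by positivity
  set D : ℝ := Real.sqrt ((p:ℝ)^2 + (q:ℝ)^2) with hDdef
  have hD : 0 < D := Real.sqrt_pos.mpr hPQ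
  have hD2 : D^2 = (p:ℝ)^2 + (q:ℝ)^2 := Real.sq_sqrt hPQ.le
  have hDq : (q:ℝ) ≤ D := by nlinarith [sq_nonneg (p:ℝ)]
  set X : ℝ := q * R / D with hXdef
  have hX0 : 0 ≤ X := by positivity
  have hXR : X ≤ R := by rw [hXdef, div_le_iff₀ hD]; nlinarith
  set M : ℤ := ⌊X⌋ with hMdef
  have hM0 : 0 ≤ M := Int.floor_nonneg.mpr hX0
  have hMX : (M:ℝ) ≤ X := Int.floor_le X
  have hXM : X < M + 1 := Int.lt_floor_add_one X
  have hMfloor : ⌊R / Real.sqrt (1 + ((p:ℝ)/q) ^ 2)⌋ = M := by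
    have hs : Real.sqrt (1 + ((p:ℝ)/q) ^ 2) = D / q := by
      rw [show 1 + ((p:ℝ)/q)^2 = (D/q)^2 by field_simp; linear_combination -hD2]
      exact Real.sqrt_sq (by positivity)
    rw [hs, hMdef, hXdef, div_div_eq_mul_div, mul_comm]
  set β : ℝ := q * ε with hβdef
  have hβ : 0 < β := by positivity
  set T : ℝ := M * β with hTdef
  have hT0 : 0 ≤ T := by
    have : (0:ℝ) ≤ (M:ℝ) := by exact_mod_cast hM0
    positivity
  set J : ℤ := ⌊T⌋ with hJdef
  have hJ0 : 0 ≤ J := Int.floor_nonneg.mpr hT0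
  have hJT : (J:ℝ) ≤ T := Int.floor_le T
  have hTbound : T ≤ q * ε * R := by
    have h1 : T ≤ X * β := by
      rw [hTdef]; exact mul_le_mul_of_nonneg_right hMX hβ.le
    have h2 : X * β ≤ q * ε * R := by
      rw [hXdef, hβdef, div_mul_eq_mul_div, div_le_iff₀ hD]
      nlinarith [mul_le_mul_of_nonneg_left hDq (by positivity : (0:ℝ) ≤ (q:ℝ)*ε*R)]
    linarith
  -- the per-j count
  set N : ℤ → ℕ := fun j => ((Finset.Icc 1 M).filter
      (fun m : ℤ => |(j:ℝ)| < (m:ℝ) * β ∧ q ∣ (j + m * p))).card with hNdef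
  -- Step 1+2: combinatorial identity
  have Δeq : latticeT ((p:ℝ)/q) ε R = ∑ j ∈ Finset.Icc (-J) J, N j := by
    have hα : ((p:ℝ)/q) * q = p := div_mul_cancel₀ _ hq0
    have step1 : ∀ m ∈ Finset.Icc 1 M,
        Set.ncard {n : ℤ | (m:ℝ) * ((p:ℝ)/q - ε) < n ∧ (n:ℝ) < m * ((p:ℝ)/q + ε)}
        = ((Finset.Icc (-J) J).filter
            (fun j : ℤ => |(j:ℝ)| < (m:ℝ) * β ∧ q ∣ (j + m * p))).card := by
      intro m hm
      rw [Finset.mem_Icc] at hm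
      have hmM : (m:ℝ) ≤ M := by exact_mod_cast hm.2
      have hinj : Function.Injective (fun n : ℤ => n * q - m * p) := by
        intro a b h
        simp only at h
        have hab : a * q = b * q := by linarith [h]
        exact mul_right_cancel₀ hqz hab
      have himg : (fun n : ℤ => n * q - m * p) ''
            {n : ℤ | (m:ℝ) * ((p:ℝ)/q - ε) < n ∧ (n:ℝ) < m * ((p:ℝ)/q + ε)}
          = ↑((Finset.Icc (-J) J).filter
              (fun j : ℤ => |(j:ℝ)| < (m:ℝ) * β ∧ q ∣ (j + m * p))) := by
        ext j
        simp only [Set.mem_image, Set.mem_setOf_eq, Finset.coe_filter,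
          Finset.mem_Icc, Finset.mem_coe, Finset.mem_filter]
        constructor
        · rintro ⟨n, ⟨h1, h2⟩, rfl⟩
          have hj : ((n * q - m * p : ℤ) : ℝ) = (n:ℝ) * q - (m:ℝ) * p := by push_cast; ring
          have hub : ((n * q - m * p : ℤ) : ℝ) < (m:ℝ) * β := by
            rw [hj, hβdef]
            nlinarith [mul_lt_mul_of_pos_right h2 hqR]
          have hlb : -((m:ℝ) * β) < ((n * q - m * p : ℤ) : ℝ) := by
            rw [hj, hβdef]
            nlinarith [mul_lt_mul_of_pos_right h1 hqR]
          have habs : |((n * q - m * p : ℤ) : ℝ)| < (m:ℝ) * β := abs_lt.mpr ⟨hlb, hub⟩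
          have hJle : |n * q - m * p| ≤ J := by
            rw [hJdef]
            apply Int.le_floor.mpr
            calc ((|n * q - m * p| : ℤ) : ℝ) = |((n * q - m * p : ℤ) : ℝ)| := by
                  push_cast; ring
              _ ≤ (m:ℝ) * β := le_of_lt habs
              _ ≤ T := by rw [hTdef]; exact mul_le_mul_of_nonneg_right hmM hβ.le
          have habs2 := abs_le.mp hJle
          exact ⟨⟨habs2.1, habs2.2⟩, habs, ⟨n, by ring⟩⟩
        · rintro ⟨⟨hj1, hj2⟩, habs, t, ht⟩
          have htR : (j:ℝ) + (m:ℝ) * p = (q:ℝ) * t := by exact_mod_cast ht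
          have habs' := abs_lt.mp habs
          have hβexp : (j:ℝ) < (m:ℝ) * ((q:ℝ) * ε) := by rw [← hβdef]; exact habs'.2
          have hβexp' : -((m:ℝ) * ((q:ℝ) * ε)) < (j:ℝ) := by rw [← hβdef]; exact habs'.1
          refine ⟨t, ⟨?_, ?_⟩, by linear_combination -ht⟩
          · rw [← mul_lt_mul_iff_of_pos_right hqR]
            have hexp : (m:ℝ) * ((p:ℝ)/q - ε) * q = (m:ℝ) * p - (m:ℝ) * ((q:ℝ) * ε) := by
              field_simp
            rw [hexp]; linarith
          · rw [← mul_lt_mul_iff_of_pos_right hqR]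
            have hexp : (m:ℝ) * ((p:ℝ)/q + ε) * q = (m:ℝ) * p + (m:ℝ) * ((q:ℝ) * ε) := by
              field_simp
            rw [hexp]; linarith
      calc Set.ncard {n : ℤ | (m:ℝ) * ((p:ℝ)/q - ε) < n ∧ (n:ℝ) < m * ((p:ℝ)/q + ε)}
          = Set.ncard ((fun n : ℤ => n * q - m * p) ''
              {n : ℤ | (m:ℝ) * ((p:ℝ)/q - ε) < n ∧ (n:ℝ) < m * ((p:ℝ)/q + ε)}) :=
            (Set.ncard_image_of_injective _ hinj).symm
        _ = _ := by rw [himg, Set.ncard_coe_finset]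
    rw [latticeT, hMfloor, Finset.sum_congr rfl step1]
    calc ∑ m ∈ Finset.Icc 1 M, ((Finset.Icc (-J) J).filter
            (fun j : ℤ => |(j:ℝ)| < (m:ℝ) * β ∧ q ∣ (j + m * p))).card
        = ∑ m ∈ Finset.Icc 1 M, ∑ j ∈ Finset.Icc (-J) J,
            if |(j:ℝ)| < (m:ℝ) * β ∧ q ∣ (j + m * p) then 1 else 0 := by
          exact Finset.sum_congr rfl fun m _ => Finset.card_filter _ _
      _ = ∑ j ∈ Finset.Icc (-J) J, ∑ m ∈ Finset.Icc 1 M,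
            if |(j:ℝ)| < (m:ℝ) * β ∧ q ∣ (j + m * p) then 1 else 0 := Finset.sum_comm
      _ = ∑ j ∈ Finset.Icc (-J) J, N j := by
          exact Finset.sum_congr rfl fun j _ => (Finset.card_filter _ _).symm
  -- step 3: per-j bound
  have key3 : ∀ j ∈ Finset.Icc (-J) J,
      |(N j : ℝ) - ((M:ℝ) - |(j:ℝ)|/β)/q| ≤ 2 := by
    intro j hj
    rw [Finset.mem_Icc] at hj
    have hjJ : |j| ≤ J := abs_le.mpr hj
    have hjT : |(j:ℝ)| ≤ T := by
      calc |(j:ℝ)| = ((|j| : ℤ) : ℝ) := by push_cast; ring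
        _ ≤ (J:ℝ) := by exact_mod_cast hjJ
        _ ≤ T := hJT
    have hA0 : (0:ℤ) ≤ ⌊|(j:ℝ)|/β⌋ := Int.floor_nonneg.mpr (by positivity)
    have hAle : ((⌊|(j:ℝ)|/β⌋ : ℤ) : ℝ) ≤ |(j:ℝ)|/β := Int.floor_le _
    have hAlt : |(j:ℝ)|/β < (⌊|(j:ℝ)|/β⌋ : ℤ) + 1 := Int.lt_floor_add_one _
    have hAM : ⌊|(j:ℝ)|/β⌋ ≤ M := by
      have hle : |(j:ℝ)|/β ≤ ((M:ℤ):ℝ) := by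
        rw [div_le_iff₀ hβ, ← hTdef]; exact hjT
      calc ⌊|(j:ℝ)|/β⌋ ≤ ⌊((M:ℤ):ℝ)⌋ := Int.floor_le_floor hle
        _ = M := Int.floor_intCast M
    have hfe : (Finset.Icc 1 M).filter
          (fun m : ℤ => |(j:ℝ)| < (m:ℝ) * β ∧ q ∣ (j + m * p))
        = (Finset.Ioc ⌊|(j:ℝ)|/β⌋ M).filter (fun m => q ∣ m - (-(j * u))) := by
      ext m
      simp only [Finset.mem_filter, Finset.mem_Icc, Finset.mem_Ioc]
      constructor
      · rintro ⟨⟨hm1, hm2⟩, hlt, t, ht⟩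
        have hAm : ⌊|(j:ℝ)|/β⌋ < m := by
          apply Int.floor_lt.mpr
          rw [div_lt_iff₀ hβ]
          exact hlt
        exact ⟨⟨hAm, hm2⟩, ⟨u * t + v * m, by linear_combination u * ht - m * huv⟩⟩
      · rintro ⟨⟨hm1, hm2⟩, s, hs⟩
        have h1m : 1 ≤ m := by omega
        have hlt : |(j:ℝ)| < (m:ℝ) * β := by
          rw [← div_lt_iff₀ hβ]
          exact Int.floor_lt.mp hm1
        exact ⟨⟨h1m, hm2⟩, hlt, ⟨j * v + p * s, by linear_combination p * hs - j * huv⟩⟩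
    have hcount := count_res q (-(j * u)) ⌊|(j:ℝ)|/β⌋ M hq hAM
    have hNj : (N j : ℝ)
        = (((Finset.Ioc ⌊|(j:ℝ)|/β⌋ M).filter (fun m => q ∣ m - (-(j * u)))).card : ℝ) := by
      rw [hNdef]; simp only []; rw [hfe]
    rw [hNj]
    have hdiff : |((M:ℝ) - (⌊|(j:ℝ)|/β⌋ : ℤ))/q - ((M:ℝ) - |(j:ℝ)|/β)/q| ≤ 1 := by
      have heq : ((M:ℝ) - (⌊|(j:ℝ)|/β⌋ : ℤ))/q - ((M:ℝ) - |(j:ℝ)|/β)/q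
          = (|(j:ℝ)|/β - (⌊|(j:ℝ)|/β⌋ : ℤ))/q := by ring
      rw [heq, abs_of_nonneg (by apply div_nonneg (by linarith) hqR.le)]
      rw [div_le_iff₀ hqR]
      linarith
    calc |(((Finset.Ioc ⌊|(j:ℝ)|/β⌋ M).filter (fun m => q ∣ m - (-(j * u)))).card : ℝ)
          - ((M:ℝ) - |(j:ℝ)|/β)/q|
        ≤ |(((Finset.Ioc ⌊|(j:ℝ)|/β⌋ M).filter (fun m => q ∣ m - (-(j * u)))).card : ℝ)
            - ((M:ℝ) - (⌊|(j:ℝ)|/β⌋ : ℤ))/q|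
          + |((M:ℝ) - (⌊|(j:ℝ)|/β⌋ : ℤ))/q - ((M:ℝ) - |(j:ℝ)|/β)/q| := abs_sub_le _ _ _
      _ ≤ 1 + 1 := add_le_add hcount hdiff
      _ = 2 := by norm_num
  -- step 4: the ideal sum
  have hcard : ((Finset.Icc (-J) J).card : ℝ) = 2*(J:ℝ) + 1 := by
    rw [Int.card_Icc]
    rw [show J + 1 - -J = 2*J + 1 by ring]
    have h0 : (0:ℤ) ≤ 2*J + 1 := by linarith [hJ0]
    calc (((2*J+1).toNat : ℕ) : ℝ) = (((2*J+1).toNat : ℤ) : ℝ) := by norm_cast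
      _ = ((2*J+1 : ℤ) : ℝ) := by rw [Int.toNat_of_nonneg h0]
      _ = 2*(J:ℝ)+1 := by push_cast; ring
  have hsum : ∑ j ∈ Finset.Icc (-J) J, ((M:ℝ) - |(j:ℝ)|/β)/q
      = ε * (M:ℝ)^2 + 1/(q*β) * (Int.fract T * (1 - Int.fract T)) := by
    have habs : ∑ j ∈ Finset.Icc (-J) J, |(j:ℝ)| = (J:ℝ)*((J:ℝ)+1) := by
      calc ∑ j ∈ Finset.Icc (-J) J, |(j:ℝ)|
          = ∑ j ∈ Finset.Icc (-J) J, ((|j| : ℤ) : ℝ) :=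
            Finset.sum_congr rfl fun j _ => by push_cast; ring
        _ = (((∑ j ∈ Finset.Icc (-J) J, |j| : ℤ)) : ℝ) := by push_cast; ring
        _ = (J:ℝ)*((J:ℝ)+1) := by rw [sum_abs_Icc J hJ0]; push_cast; ring
    have hfr : Int.fract T = T - (J:ℝ) := by
      rw [hJdef]; exact (Int.self_sub_floor T).symm
    calc ∑ j ∈ Finset.Icc (-J) J, ((M:ℝ) - |(j:ℝ)|/β)/q
        = (((Finset.Icc (-J) J).card : ℝ) * (M:ℝ)
            - (∑ j ∈ Finset.Icc (-J) J, |(j:ℝ)|)/β)/q := by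
          rw [← Finset.sum_div, Finset.sum_sub_distrib, Finset.sum_const, ← Finset.sum_div,
            nsmul_eq_mul]
      _ = ((2*(J:ℝ)+1) * (M:ℝ) - ((J:ℝ)*((J:ℝ)+1))/β)/q := by rw [hcard, habs]
      _ = ε * (M:ℝ)^2 + 1/(q*β) * (Int.fract T * (1 - Int.fract T)) := by
          rw [hfr, hTdef, hβdef]
          field_simp
          ring
  -- step 5: assembly
  have hM0R : (0:ℝ) ≤ (M:ℝ) := by exact_mod_cast hM0
  have hNcast : ((latticeT ((p:ℝ)/q) ε R : ℕ) : ℝ) = ∑ j ∈ Finset.Icc (-J) J, (N j : ℝ) := by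
    rw [Δeq]; push_cast; ring
  have t1 : |((latticeT ((p:ℝ)/q) ε R : ℕ) : ℝ)
      - (ε * (M:ℝ)^2 + 1/(q*β) * (Int.fract T * (1 - Int.fract T)))| ≤ 2*(2*(J:ℝ)+1) := by
    rw [← hsum, hNcast, ← Finset.sum_sub_distrib]
    calc |∑ j ∈ Finset.Icc (-J) J, ((N j : ℝ) - ((M:ℝ) - |(j:ℝ)|/β)/q)|
        ≤ ∑ j ∈ Finset.Icc (-J) J, |(N j : ℝ) - ((M:ℝ) - |(j:ℝ)|/β)/q| :=
          Finset.abs_sum_le_sum_abs _ _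
      _ ≤ ∑ _j ∈ Finset.Icc (-J) J, (2:ℝ) := Finset.sum_le_sum key3
      _ = 2*(2*(J:ℝ)+1) := by rw [Finset.sum_const, nsmul_eq_mul, hcard]; ring
  have hEe : ε * (q : ℝ) ^ 2 * R ^ 2 / ((p : ℝ) ^ 2 + (q : ℝ) ^ 2) +
            1 / ((q : ℝ) ^ 2 * ε) * Int.fract (ε * (q : ℝ) ^ 2 * R / D) *
              (1 - Int.fract (ε * (q : ℝ) ^ 2 * R / D))
      = ε * X^2 + 1/(q*β) * (Int.fract (β*X) * (1 - Int.fract (β*X))) := by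
    have harg : ε * (q:ℝ)^2 * R / D = β * X := by
      rw [hβdef, hXdef]; field_simp
    rw [harg, hXdef, hβdef, ← hD2]
    field_simp
  have t2 : |(ε * (M:ℝ)^2 + 1/(q*β) * (Int.fract T * (1 - Int.fract T)))
      - (ε * X^2 + 1/(q*β) * (Int.fract (β*X) * (1 - Int.fract (β*X))))| ≤ 2*ε*R + 1 := by
    have a1 : |ε*(M:ℝ)^2 - ε*X^2| ≤ 2*ε*R := by
      have hp1 : (X - (M:ℝ)) * (X + (M:ℝ)) ≤ 1 * (2*R) :=
        mul_le_mul (by linarith) (by linarith) (by linarith) (by linarith)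
      have hsq : X^2 - ((M:ℝ))^2 ≤ 2*R := by nlinarith [hp1]
      have hsq2 : ((M:ℝ))^2 ≤ X^2 := by nlinarith [hMX, hM0R]
      have hmul := mul_le_mul_of_nonneg_left hsq hε.le
      have hmul2 := mul_le_mul_of_nonneg_left hsq2 hε.le
      have hpos : (0:ℝ) ≤ 2*ε*R := by positivity
      rw [abs_le]
      constructor <;> nlinarith [hmul, hmul2, hpos]
    have hXM1 : X - (M:ℝ) ≤ 1 := by linarith
    have l2 : |T - β*X| ≤ β := by
      rw [hTdef, abs_le]
      constructor
      · linarith [mul_le_mul_of_nonneg_left hXM1 hβ.le]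
      · linarith [mul_nonneg hβ.le (sub_nonneg.mpr hMX), hβ.le]
    have l1 := fract_lip T (β*X)
    have a2 : |1/(q*β) * (Int.fract T * (1 - Int.fract T))
        - 1/(q*β) * (Int.fract (β*X) * (1 - Int.fract (β*X)))| ≤ 1 := by
      rw [← mul_sub, abs_mul, abs_of_nonneg (by positivity : (0:ℝ) ≤ 1/((q:ℝ)*β))]
      calc 1/((q:ℝ)*β) * |Int.fract T * (1 - Int.fract T)
            - Int.fract (β*X) * (1 - Int.fract (β*X))|
          ≤ 1/((q:ℝ)*β) * β := mul_le_mul_of_nonneg_left (l1.trans l2) (by positivity)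
        _ = 1/(q:ℝ) := by field_simp
        _ ≤ 1 := by rw [div_le_one hqR]; linarith
    have hsplit : (ε * (M:ℝ)^2 + 1/(q*β) * (Int.fract T * (1 - Int.fract T)))
        - (ε * X^2 + 1/(q*β) * (Int.fract (β*X) * (1 - Int.fract (β*X))))
        = (ε*(M:ℝ)^2 - ε*X^2) + (1/(q*β) * (Int.fract T * (1 - Int.fract T))
            - 1/(q*β) * (Int.fract (β*X) * (1 - Int.fract (β*X)))) := by ring
    rw [hsplit]
    calc |(ε*(M:ℝ)^2 - ε*X^2) + (1/(q*β) * (Int.fract T * (1 - Int.fract T))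
            - 1/(q*β) * (Int.fract (β*X) * (1 - Int.fract (β*X))))|
        ≤ |ε*(M:ℝ)^2 - ε*X^2| + |1/(q*β) * (Int.fract T * (1 - Int.fract T))
            - 1/(q*β) * (Int.fract (β*X) * (1 - Int.fract (β*X)))| := abs_add_le _ _
      _ ≤ 2*ε*R + 1 := add_le_add a1 a2
  rw [hEe]
  have hJle : (J:ℝ) ≤ (q:ℝ)*ε*R := le_trans hJT hTbound
  have hεR : 0 < ε*R := by positivity
  calc |((latticeT ((p:ℝ)/q) ε R : ℕ) : ℝ)
        - (ε * X^2 + 1/(q*β) * (Int.fract (β*X) * (1 - Int.fract (β*X))))|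
      ≤ |((latticeT ((p:ℝ)/q) ε R : ℕ) : ℝ)
          - (ε * (M:ℝ)^2 + 1/(q*β) * (Int.fract T * (1 - Int.fract T)))|
        + |(ε * (M:ℝ)^2 + 1/(q*β) * (Int.fract T * (1 - Int.fract T)))
          - (ε * X^2 + 1/(q*β) * (Int.fract (β*X) * (1 - Int.fract (β*X))))| := abs_sub_le _ _ _
    _ ≤ 2*(2*(J:ℝ)+1) + (2*ε*R + 1) := add_le_add t1 t2
    _ ≤ (4*(q:ℝ) + 6) * (1 + ε * R) := by
        have hmm : 1*(ε*R) ≤ (q:ℝ)*(ε*R) := mul_le_mul_of_nonneg_right hq1R hεR.le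
        linarith [hJle, hεR.le, hq1R, hmm]
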